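/- Let η1,η2,η3,γ1,γ2,γ3 be real numbers and let g be the 4-dimensional real Lie algebra with basis e1,e2,e3,e4 and only nonzero brackets [e1,e4] = η1·e1 − γ1·e2 − γ2·e3, [e2,e4] = γ1·e1 + η2·e2 − γ3·e3, [e3,e4] = γ2·e1 + γ3·e2 + η3·e3, equipped with the Lorentzian inner product making {e_i} orthonormal with ⟨e4,e4⟩ = −1. Then (g,⟨,⟩) is Einstein if and only if η1 = η2 = η3. -/
import Mathlib


namespace Stmt17

abbrev V : Type := Fin 4 → ℝ

noncomputable def e (i : Fin 4) : V := fun j => if j = i then 1 else 0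

noncomputable def br (eta1 eta2 eta3 g1 g2 g3 : ℝ) (x y : V) : V :=
  let A := x 0 * y 3 - x 3 * y 0
  let B := x 1 * y 3 - x 3 * y 1
  let C := x 2 * y 3 - x 3 * y 2
  let P := x 0 * y 1 - x 1 * y 0
  let Q := x 0 * y 2 - x 2 * y 0
  let R := x 1 * y 2 - x 2 * y 1
  ![eta1 * A + g1 * B + g2 * C, -(g1 * A) + eta2 * B + g3 * C, -(g2 * A) - g3 * B + eta3 * C, 0]

noncomputable def ip (x y : V) : ℝ := x 0 * y 0 + x 1 * y 1 + x 2 * y 2 - x 3 * y 3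

noncomputable def Rcurv (eta1 eta2 eta3 g1 g2 g3 : ℝ) (nabla : V → V → V) (z x y : V) : V :=
  nabla (br eta1 eta2 eta3 g1 g2 g3 z x) y - nabla z (nabla x y) + nabla x (nabla z y)

noncomputable def rho (eta1 eta2 eta3 g1 g2 g3 : ℝ) (nabla : V → V → V) (x y : V) : ℝ :=
  ∑ i : Fin 4, Rcurv eta1 eta2 eta3 g1 g2 g3 nabla (e i) x y i

noncomputable def tau (Ric : V → V) : ℝ := ∑ i : Fin 4, Ric (e i) i

def IsDeriv (eta1 eta2 eta3 g1 g2 g3 : ℝ) (D : V → V) : Prop :=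
  ∀ x y : V, D (br eta1 eta2 eta3 g1 g2 g3 x y) = br eta1 eta2 eta3 g1 g2 g3 (D x) y + br eta1 eta2 eta3 g1 g2 g3 x (D y)

def Einstein (eta1 eta2 eta3 g1 g2 g3 : ℝ) (nabla : V → V → V) : Prop :=
  ∃ l : ℝ, ∀ x y : V, rho eta1 eta2 eta3 g1 g2 g3 nabla x y = l * ip x y

theorem stmt_17 (eta1 eta2 eta3 g1 g2 g3 : ℝ)
    (nabla : V → V → V)
    (hKoszul : ∀ x y z : V, 2 * ip (nabla x y) z =
      ip (br eta1 eta2 eta3 g1 g2 g3 x y) z - ip (br eta1 eta2 eta3 g1 g2 g3 y z) x + ip (br eta1 eta2 eta3 g1 g2 g3 z x) y)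
    (Ric : V → V)
    (hRic : ∀ x y : V, ip (Ric x) y = rho eta1 eta2 eta3 g1 g2 g3 nabla x y) :
    Einstein eta1 eta2 eta3 g1 g2 g3 nabla ↔ (eta1 = eta2 ∧ eta2 = eta3) := by
  have n0 : ∀ x y : V, nabla x y 0 =
      eta1 * (x 0 * y 3) - g1 * (x 3 * y 1) - g2 * (x 3 * y 2) := by
    intro x y
    have h := hKoszul x y (e 0)
    simp [ip, e, br, Fin.isValue] at h
    linarith
  have n1 : ∀ x y : V, nabla x y 1 =
      g1 * (x 3 * y 0) + eta2 * (x 1 * y 3) - g3 * (x 3 * y 2) := by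
    intro x y
    have h := hKoszul x y (e 1)
    simp [ip, e, br, Fin.isValue] at h
    linarith
  have n2 : ∀ x y : V, nabla x y 2 =
      g2 * (x 3 * y 0) + g3 * (x 3 * y 1) + eta3 * (x 2 * y 3) := by
    intro x y
    have h := hKoszul x y (e 2)
    simp [ip, e, br, Fin.isValue] at h
    linarith
  have n3 : ∀ x y : V, nabla x y 3 =
      eta1 * (x 0 * y 0) + eta2 * (x 1 * y 1) + eta3 * (x 2 * y 2) := by
    intro x y
    have h := hKoszul x y (e 3)
    simp [ip, e, br, Fin.isValue] at h
    linarith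
  have rho_eq : ∀ x y : V, rho eta1 eta2 eta3 g1 g2 g3 nabla x y =
      eta3*g3*(x 2*y 1) + eta3*g3*(x 1*y 2) + eta3*g2*(x 2*y 0) + eta3*g2*(x 0*y 2)
      + eta3^2*(x 3*y 3) - eta3^2*(x 2*y 2) - eta2*g3*(x 2*y 1) - eta2*g3*(x 1*y 2)
      + eta2*g1*(x 1*y 0) + eta2*g1*(x 0*y 1) - eta2*eta3*(x 2*y 2) - eta2*eta3*(x 1*y 1)
      + eta2^2*(x 3*y 3) - eta2^2*(x 1*y 1) - eta1*g2*(x 2*y 0) - eta1*g2*(x 0*y 2)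
      - eta1*g1*(x 1*y 0) - eta1*g1*(x 0*y 1) - eta1*eta3*(x 2*y 2) - eta1*eta3*(x 0*y 0)
      - eta1*eta2*(x 1*y 1) - eta1*eta2*(x 0*y 0) + eta1^2*(x 3*y 3) - eta1^2*(x 0*y 0) := by
    intro x y
    simp only [rho, Fin.sum_univ_four, Rcurv, Pi.add_apply, Pi.sub_apply]
    simp only [n0, n1, n2, n3]
    simp [br, e]
    ring
  constructor
  · rintro ⟨l, hl⟩
    have H1 := hl (e 0) (e 0)
    have H2 := hl (e 1) (e 1)
    have H3 := hl (e 2) (e 2)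
    have H4 := hl (e 3) (e 3)
    rw [rho_eq] at H1 H2 H3 H4
    simp [ip, e] at H1 H2 H3 H4
    have key : (eta1 - eta2)^2 + (eta2 - eta3)^2 + (eta3 - eta1)^2 = 0 := by
      nlinarith [H1, H2, H3, H4]
    constructor
    · have h12 : (eta1 - eta2)^2 = 0 := by nlinarith [sq_nonneg (eta2 - eta3), sq_nonneg (eta3 - eta1)]
      have := pow_eq_zero_iff (n := 2) (by norm_num) |>.mp h12
      linarith [this]
    · have h23 : (eta2 - eta3)^2 = 0 := by nlinarith [sq_nonneg (eta1 - eta2), sq_nonneg (eta3 - eta1)]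
      have := pow_eq_zero_iff (n := 2) (by norm_num) |>.mp h23
      linarith [this]
  · rintro ⟨h12, h23⟩
    subst h12; subst h23
    refine ⟨-3 * eta1^2, fun x y => ?_⟩
    rw [rho_eq]
    simp only [ip]
    ring

end Stmt17
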